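/- Rollout performance bound: suppose V* is bounded with V*(t) = 0 and V* = T V*, V is bounded with V(t) = 0 and ‖V − V*‖∞ ≤ ε, π_R is the rollout policy for V, and π_R is proper from the initial state x. Then J^{π_R}(x) − V*(x) ≤ 2ε · E[τ], where τ is the hitting time of the terminal state under π_R. -/

import Mathlib

/-!
Along the closed loop, `V*` is a Lyapunov function. Since `π_R` is greedy for `V` and `V` is
`ε`-close to the Bellman fixed point `V*`, every nonterminal state `y` satisfies the drift
inequality `f(y, π_R y) + E V*(F(y, π_R y, w)) ≤ V*(y) + 2ε`. As `x_k` is independent of `w_k`,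
taking expectations along the trajectory and telescoping gives
`E[Σ_{k<n, x_k ≠ t} f(x_k, π_R x_k)] + E V*(x_n) ≤ V*(x) + 2ε Σ_{k<n} P(x_k ≠ t)`.
Because `τ < ∞` a.s., `V*` is bounded and `V*(t) = 0`, `E V*(x_n) → 0`, while
`Σ_k P(x_k ≠ t) = E τ`.
-/

open MeasureTheory ProbabilityTheory Filter
open scoped ENNReal

open Classical in
/-- Bellman operator of the SSP: `(T V)(x) = inf_{u ∈ U(x)} ( f(x,u) + ∫ V(F(x,u,w)) dμ(w) )`
for nonterminal `x`, and `(T V)(t) = 0`. -/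
noncomputable def bellman {X U W : Type*} [MeasurableSpace W] (μ : Measure W)
    (t : X) (Ua : X → Set U) (f : X → U → ℝ) (F : X → U → W → X)
    (V : X → ℝ) (x : X) : ℝ :=
  if x = t then 0 else ⨅ u : Ua x, (f x (u : U) + ∫ w, V (F x (u : U) w) ∂μ)

/-- Closed-loop trajectory driven by a disturbance sequence `ω : ℕ → W`:
`x₀ = x`, `x_{k+1} = F(x_k, π(x_k), ω_k)`. -/
def traj {X U W : Type*} (F : X → U → W → X) (π : X → U) (x : X) (ω : ℕ → W) : ℕ → X
  | 0 => x
  | k + 1 => F (traj F π x ω k) (π (traj F π x ω k)) (ω k)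

/-- The trajectory as a family of random variables on an abstract sample space `Ω`,
given the disturbance random variables `ξ k : Ω → W`. -/
def trajOn {X U W Ω : Type*} (F : X → U → W → X) (π : X → U) (x : X)
    (ξ : ℕ → Ω → W) (k : ℕ) (ω : Ω) : X :=
  traj F π x (fun i => ξ i ω) k

/-- Hitting time `τ = inf { k ≥ 0 : x_k = t }` of the terminal state (`∞` if never reached),
valued in `ℝ≥0∞`. -/
noncomputable def hitTime {X Ω : Type*} (t : X) (Y : ℕ → Ω → X) (ω : Ω) : ℝ≥0∞ :=
  ⨅ (k : ℕ) (_ : Y k ω = t), (k : ℝ≥0∞)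

/-- Total expected cost `J = E[ Σ_{k=0}^{τ-1} f(x_k, π(x_k)) ]` (in `ℝ≥0∞`; the stage cost
is nonnegative). -/
noncomputable def totalCost {X U Ω : Type*} [MeasurableSpace Ω] (P : Measure Ω)
    (t : X) (f : X → U → ℝ) (π : X → U) (Y : ℕ → Ω → X) : ℝ≥0∞ :=
  ∫⁻ ω, ∑' (k : ℕ), (if (k : ℝ≥0∞) < hitTime t Y ω
    then ENNReal.ofReal (f (Y k ω) (π (Y k ω))) else 0) ∂P

/-- Expected hitting time `E[τ]` (in `ℝ≥0∞`). -/
noncomputable def expHit {X Ω : Type*} [MeasurableSpace Ω] (P : Measure Ω)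
    (t : X) (Y : ℕ → Ω → X) : ℝ≥0∞ :=
  ∫⁻ ω, hitTime t Y ω ∂P

open Topology

theorem summable_and_tsum_le_of_telescoping {a c d : ℕ → ℝ} (hc : ∀ k, 0 ≤ c k)
    (hd : Summable d) (ha : Tendsto a atTop (𝓝 0))
    (hstep : ∀ k, c k + a (k + 1) ≤ a k + d k) :
    Summable c ∧ ∑' k, c k ≤ a 0 + ∑' k, d k := by
  have hpartial :
      ∀ n, ∑ k ∈ Finset.range n, c k ≤ a 0 + ∑ k ∈ Finset.range n, d k - a n := by
    intro n
    induction n with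
    | zero => simp
    | succ n ih => simp only [Finset.sum_range_succ]; linarith [hstep n]
  have hlim : Tendsto (fun n => a 0 + ∑ k ∈ Finset.range n, d k - a n) atTop
      (𝓝 (a 0 + ∑' k, d k - 0)) :=
    (tendsto_const_nhds.add hd.hasSum.tendsto_sum_nat).sub ha
  obtain ⟨B, hB⟩ := hlim.bddAbove_range
  have hc_sum : Summable c :=
    summable_of_sum_range_le hc fun n => (hpartial n).trans (hB ⟨n, rfl⟩)
  refine ⟨hc_sum, ?_⟩
  simpa using le_of_tendsto_of_tendsto' hc_sum.hasSum.tendsto_sum_nat hlim hpartial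

theorem coe_tsum_ofReal_le_of_telescoping {a c d : ℕ → ℝ} (hc : ∀ k, 0 ≤ c k)
    (hd : ∀ k, 0 ≤ d k) (ha : Tendsto a atTop (𝓝 0))
    (hstep : ∀ k, c k + a (k + 1) ≤ a k + d k) :
    ((∑' k, ENNReal.ofReal (c k) : ℝ≥0∞) : EReal)
      ≤ a 0 + ((∑' k, ENNReal.ofReal (d k) : ℝ≥0∞) : EReal) := by
  by_cases hD : ∑' k, ENNReal.ofReal (d k) = ⊤
  · rw [hD, EReal.coe_ennreal_top, EReal.add_top_of_ne_bot (EReal.coe_ne_bot _)]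
    exact le_top
  have hd_sum : Summable d := by
    simpa only [ENNReal.toReal_ofReal (hd _)] using ENNReal.summable_toReal hD
  obtain ⟨hc_sum, hle⟩ := summable_and_tsum_le_of_telescoping hc hd_sum ha hstep
  rw [← ENNReal.ofReal_tsum_of_nonneg hc hc_sum, ← ENNReal.ofReal_tsum_of_nonneg hd hd_sum,
    EReal.coe_ennreal_ofReal, EReal.coe_ennreal_ofReal, max_eq_left (tsum_nonneg hc),
    max_eq_left (tsum_nonneg hd)]
  exact_mod_cast hle

section HitTime

variable {X Ω : Type*} {t : X} {Y : ℕ → Ω → X} {ω : Ω}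

-- A hypothesis `Monotone fun k => Y k ω = t` (in the order `False ≤ True` on `Prop`) says that
-- the path `k ↦ Y k ω` stays at `t` once it reaches it.

theorem hitTime_le_of_eq {k : ℕ} (h : Y k ω = t) : hitTime t Y ω ≤ k :=
  iInf₂_le k h

theorem hitTime_eq_top (h : ∀ k, Y k ω ≠ t) : hitTime t Y ω = ⊤ := by
  simp [hitTime, h]

theorem exists_eq_of_hitTime_lt_top (h : hitTime t Y ω < ⊤) : ∃ k, Y k ω = t := by
  by_contra! hne
  exact h.ne (hitTime_eq_top hne)

theorem hitTime_eq_find [DecidablePred fun k => Y k ω = t] (h : ∃ k, Y k ω = t) :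
    hitTime t Y ω = Nat.find h :=
  le_antisymm (hitTime_le_of_eq (Nat.find_spec h))
    (le_iInf₂ fun _ hj => Nat.cast_le.2 (Nat.find_min' h hj))

theorem natCast_lt_hitTime_iff (habs : Monotone fun k => Y k ω = t) (k : ℕ) :
    (k : ℝ≥0∞) < hitTime t Y ω ↔ Y k ω ≠ t := by
  refine ⟨fun hlt heq => (hitTime_le_of_eq heq).not_gt hlt, fun hne => ?_⟩
  have hle : ((k + 1 : ℕ) : ℝ≥0∞) ≤ hitTime t Y ω :=
    le_iInf₂ fun j hj => Nat.cast_le.2 <| Nat.succ_le_of_lt <|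
      lt_of_not_ge fun hjk => hne (habs hjk hj)
  exact lt_of_lt_of_le (Nat.cast_lt.2 k.lt_succ_self) hle

theorem hitTime_eq_tsum_indicator (habs : Monotone fun k => Y k ω = t) :
    hitTime t Y ω = ∑' k, ({t}ᶜ : Set X).indicator 1 (Y k ω) := by
  classical
  simp only [← Set.indicator_comp_right (fun k => Y k ω), Function.comp_def, Pi.one_apply]
  by_cases h : ∃ k, Y k ω = t
  · have hset : (fun k => Y k ω) ⁻¹' {t}ᶜ = ↑(Finset.range (Nat.find h)) := by
      ext k
      rw [Set.mem_preimage, Set.mem_compl_singleton_iff, ← natCast_lt_hitTime_iff habs,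
        hitTime_eq_find h, Nat.cast_lt, Finset.coe_range, Set.mem_Iio]
    rw [hitTime_eq_find h, hset, ← tsum_subtype, ENNReal.tsum_set_one,
      Set.encard_coe_eq_coe_finsetCard, Finset.card_range, ENat.toENNReal_coe]
  · push Not at h
    simp [hitTime_eq_top h, h]

end HitTime

theorem ProbabilityTheory.IndepFun.integral_comp_prod_eq_integral_integral {X W Ω : Type*}
    [MeasurableSpace X] [MeasurableSpace W] [MeasurableSpace Ω] {P : Measure Ω}
    [IsFiniteMeasure P] {μ : Measure W} [SFinite μ] {Z : Ω → X} {η : Ω → W}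
    (hZ : Measurable Z) (hη : Measurable η) (hind : IndepFun Z η P) (hlaw : P.map η = μ)
    {h : X × W → ℝ} (hh : Integrable h ((P.map Z).prod μ)) :
    ∫ ω, h (Z ω, η ω) ∂P = ∫ ω, ∫ w, h (Z ω, w) ∂μ ∂P := by
  have hpair : P.map (fun ω => (Z ω, η ω)) = (P.map Z).prod μ := by
    rw [← hlaw]
    exact (indepFun_iff_map_prod_eq_prod_map_map hZ.aemeasurable hη.aemeasurable).mp hind
  calc ∫ ω, h (Z ω, η ω) ∂P = ∫ p, h p ∂(P.map fun ω => (Z ω, η ω)) := by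
        rw [integral_map (hZ.prodMk hη).aemeasurable (hpair ▸ hh.aestronglyMeasurable)]
    _ = ∫ y, ∫ w, h (y, w) ∂μ ∂(P.map Z) := by rw [hpair, integral_prod h hh]
    _ = ∫ ω, ∫ w, h (Z ω, w) ∂μ ∂P :=
        integral_map hZ.aemeasurable hh.integral_prod_left.aestronglyMeasurable

theorem monotone_traj_eq {X U W : Type*} {F : X → U → W → X} {π : X → U} {x t : X}
    (ht : ∀ w, F t (π t) w = t) (ω : ℕ → W) : Monotone fun k => traj F π x ω k = t :=
  monotone_nat_of_le_succ fun k (hk : traj F π x ω k = t) => by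
    simp only [traj, hk, ht]

section Trajectory

variable {X U W Ω : Type*} [MeasurableSpace X] [MeasurableSpace U] [MeasurableSpace W]
  [MeasurableSpace Ω] {F : X → U → W → X} {π : X → U} {x t : X} {ξ : ℕ → Ω → W}

theorem exists_measurable_traj_eq_comp
    (hF : Measurable fun p : X × U × W => F p.1 p.2.1 p.2.2) (hπ : Measurable π) (k : ℕ) :
    ∃ G : (Finset.range k → W) → X, Measurable G ∧
      ∀ ω : ℕ → W, traj F π x ω k = G fun i => ω i := by
  induction k with
  | zero => exact ⟨fun _ => x, measurable_const, fun _ => rfl⟩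
  | succ n ih =>
    obtain ⟨G, hG, hGeq⟩ := ih
    let restrict : (Finset.range (n + 1) → W) → (Finset.range n → W) :=
      fun v i => v ⟨i, Finset.range_subset_range.2 n.le_succ i.2⟩
    have hrestrict : Measurable restrict := measurable_pi_lambda _ fun _ => measurable_pi_apply _
    refine ⟨fun v => F (G (restrict v)) (π (G (restrict v)))
        (v ⟨n, Finset.self_mem_range_succ n⟩),
      hF.comp ((hG.comp hrestrict).prodMk (((hπ.comp hG).comp hrestrict).prodMk
        (measurable_pi_apply _))), fun ω => ?_⟩
    simp only [traj, hGeq ω]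
    rfl

theorem measurable_trajOn (hF : Measurable fun p : X × U × W => F p.1 p.2.1 p.2.2)
    (hπ : Measurable π) (hξ : ∀ k, Measurable (ξ k)) (k : ℕ) :
    Measurable (trajOn F π x ξ k) := by
  obtain ⟨G, hG, hGeq⟩ := exists_measurable_traj_eq_comp (x := x) hF hπ k
  rw [show trajOn F π x ξ k = G ∘ fun ω i => ξ i ω from funext fun ω => hGeq _]
  exact hG.comp (measurable_pi_lambda _ fun i => hξ i)

theorem indepFun_trajOn (hF : Measurable fun p : X × U × W => F p.1 p.2.1 p.2.2)
    (hπ : Measurable π) {P : Measure Ω} (hξ : ∀ k, Measurable (ξ k)) (hind : iIndepFun ξ P)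
    (k : ℕ) : IndepFun (trajOn F π x ξ k) (ξ k) P := by
  obtain ⟨G, hG, hGeq⟩ := exists_measurable_traj_eq_comp (x := x) hF hπ k
  have hpast := hind.indepFun_finset (Finset.range k) {k} (by simp) hξ
  rw [show trajOn F π x ξ k = G ∘ fun ω i => ξ i ω from funext fun ω => hGeq _]
  exact hpast.comp hG (measurable_pi_apply ⟨k, Finset.mem_singleton_self k⟩)

end Trajectory

section CostAndHittingTime

variable {X U Ω : Type*} [MeasurableSpace X] [MeasurableSpace Ω] {P : Measure Ω} {t : X}
  {Y : ℕ → Ω → X}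

theorem totalCost_eq_tsum_lintegral [MeasurableSingletonClass X]
    (habs : ∀ ω, Monotone fun k => Y k ω = t) (hY : ∀ k, Measurable (Y k))
    {f : X → U → ℝ} {π : X → U}
    (hφ : Measurable fun y => f y (π y)) :
    totalCost P t f π Y
      = ∑' k, ∫⁻ ω, ENNReal.ofReal (({t}ᶜ : Set X).indicator (fun y => f y (π y)) (Y k ω)) ∂P := by
  have hterm : ∀ ω (k : ℕ),
      (if (k : ℝ≥0∞) < hitTime t Y ω then ENNReal.ofReal (f (Y k ω) (π (Y k ω))) else 0)
        = ENNReal.ofReal (({t}ᶜ : Set X).indicator (fun y => f y (π y)) (Y k ω)) := by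
    intro ω k
    by_cases hk : Y k ω = t <;> simp [natCast_lt_hitTime_iff (habs ω), hk]
  simp only [totalCost, hterm]
  exact lintegral_tsum fun k =>
    ((hφ.indicator (measurableSet_singleton t).compl).comp (hY k)).ennreal_ofReal.aemeasurable

theorem expHit_eq_tsum_measure [MeasurableSingletonClass X]
    (habs : ∀ ω, Monotone fun k => Y k ω = t) (hY : ∀ k, Measurable (Y k)) :
    expHit P t Y = ∑' k, P (Y k ⁻¹' {t}ᶜ) := by
  have hmeas : ∀ k, MeasurableSet (Y k ⁻¹' {t}ᶜ) :=
    fun k => hY k (measurableSet_singleton t).compl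
  simp only [expHit, hitTime_eq_tsum_indicator (habs _)]
  refine (lintegral_tsum fun k => ?_).trans (tsum_congr fun k => ?_)
  · exact ((measurable_one.indicator (measurableSet_singleton t).compl).comp (hY k)).aemeasurable
  · rw [← lintegral_indicator_one (hmeas k)]
    rfl

theorem tendsto_integral_comp_of_hitTime_lt_top [IsFiniteMeasure P]
    (habs : ∀ ω, Monotone fun k => Y k ω = t) (hY : ∀ k, Measurable (Y k))
    (hτ : ∀ᵐ ω ∂P, hitTime t Y ω < ⊤) {L : X → ℝ} (hL : Measurable L) {C : ℝ}
    (hC : ∀ y, |L y| ≤ C) (hLt : L t = 0) :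
    Tendsto (fun n => ∫ ω, L (Y n ω) ∂P) atTop (𝓝 0) := by
  have hlim : ∀ᵐ ω ∂P, Tendsto (fun n => L (Y n ω)) atTop (𝓝 0) := by
    filter_upwards [hτ] with ω hω
    obtain ⟨N, hN⟩ := exists_eq_of_hitTime_lt_top hω
    exact tendsto_atTop_of_eventually_const fun n hn => by rw [habs ω hn hN, hLt]
  simpa using tendsto_integral_of_dominated_convergence (fun _ => C)
    (fun n => (hL.comp (hY n)).aestronglyMeasurable) (integrable_const C)
    (fun n => ae_of_all _ fun ω => hC (Y n ω)) hlim

end CostAndHittingTime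

theorem abs_integral_comp_le {X W : Type*} [MeasurableSpace W] {μ : Measure W}
    [IsProbabilityMeasure μ] {L : X → ℝ} {C : ℝ} (hC : ∀ y, |L y| ≤ C) (G : W → X) :
    |∫ w, L (G w) ∂μ| ≤ C := by
  simpa using norm_integral_le_of_norm_le_const (μ := μ) (f := fun w => L (G w))
    (ae_of_all _ fun w => hC (G w))

theorem abs_indicator_le_of_drift {X U W : Type*} [MeasurableSpace W] {μ : Measure W}
    [IsProbabilityMeasure μ] {F : X → U → W → X} {π : X → U} {t : X} {f : X → U → ℝ}
    {L : X → ℝ} {C δ : ℝ} (hδ : 0 ≤ δ) (hfnn : ∀ y, 0 ≤ f y (π y)) (hC : ∀ y, |L y| ≤ C)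
    (hdrift : ∀ y, y ≠ t → f y (π y) + ∫ w, L (F y (π y) w) ∂μ ≤ L y + δ) (y : X) :
    |({t}ᶜ : Set X).indicator (fun y => f y (π y)) y| ≤ 2 * C + δ := by
  by_cases hy : y = t
  · rw [hy, Set.indicator_of_notMem (by simp), abs_zero]
    linarith [(abs_nonneg _).trans (hC t)]
  · rw [Set.indicator_of_mem (Set.mem_compl_singleton_iff.2 hy), abs_of_nonneg (hfnn y)]
    linarith [hdrift y hy, abs_le.1 (abs_integral_comp_le (μ := μ) hC (F y (π y))),
      abs_le.1 (hC y)]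

section Drift

variable {X U W Ω : Type*} [MeasurableSpace X] [MeasurableSingletonClass X] [MeasurableSpace U]
  [MeasurableSpace W] [MeasurableSpace Ω] {μ : Measure W} [IsProbabilityMeasure μ]
  {P : Measure Ω} {F : X → U → W → X} {π : X → U} {t : X}
  {f : X → U → ℝ} {L : X → ℝ} {C δ : ℝ}

theorem integral_add_integral_le_of_drift [IsFiniteMeasure P]
    (hF : Measurable fun p : X × U × W => F p.1 p.2.1 p.2.2)
    (hπ : Measurable π) (ht : ∀ w, F t (π t) w = t) (hL : Measurable L) (hC : ∀ y, |L y| ≤ C)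
    (hLt : L t = 0) (hdrift : ∀ y, y ≠ t → f y (π y) + ∫ w, L (F y (π y) w) ∂μ ≤ L y + δ)
    {Z : Ω → X} {η : Ω → W} (hZ : Measurable Z) (hη : Measurable η) (hind : IndepFun Z η P)
    (hlaw : P.map η = μ)
    (hcost : Integrable (fun ω => ({t}ᶜ : Set X).indicator (fun y => f y (π y)) (Z ω)) P) :
    ∫ ω, ({t}ᶜ : Set X).indicator (fun y => f y (π y)) (Z ω) ∂P
        + ∫ ω, L (F (Z ω) (π (Z ω)) (η ω)) ∂P
      ≤ ∫ ω, L (Z ω) ∂P + δ * P.real (Z ⁻¹' {t}ᶜ) := by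
  set g : X → ℝ := fun y => ∫ w, L (F y (π y) w) ∂μ
  have hnext : Measurable fun p : X × W => L (F p.1 (π p.1) p.2) :=
    hL.comp (hF.comp (measurable_fst.prodMk ((hπ.comp measurable_fst).prodMk measurable_snd)))
  have hg : Measurable g := (hnext.stronglyMeasurable.integral_prod_right' (ν := μ)).measurable
  have hgZ : Integrable (fun ω => g (Z ω)) P :=
    Integrable.of_bound (hg.comp hZ).aestronglyMeasurable C
      (ae_of_all _ fun ω => abs_integral_comp_le hC _)
  have hLZ : Integrable (fun ω => L (Z ω)) P :=
    Integrable.of_bound (hL.comp hZ).aestronglyMeasurable C (ae_of_all _ fun ω => hC _)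
  have hmeas : MeasurableSet (Z ⁻¹' {t}ᶜ) := hZ (measurableSet_singleton t).compl
  have hstep : ∀ y, ({t}ᶜ : Set X).indicator (fun y => f y (π y)) y + g y
      ≤ L y + ({t}ᶜ : Set X).indicator (fun _ => δ) y := by
    intro y
    by_cases hy : y = t
    · simp [g, hy, ht, hLt]
    · simpa [hy] using hdrift y hy
  calc _ = ∫ ω, (({t}ᶜ : Set X).indicator (fun y => f y (π y)) (Z ω) + g (Z ω)) ∂P := by
        rw [integral_add hcost hgZ, hind.integral_comp_prod_eq_integral_integral hZ hη hlaw
          (Integrable.of_bound hnext.aestronglyMeasurable C (ae_of_all _ fun p => hC _))]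
    _ ≤ ∫ ω, (L (Z ω) + (Z ⁻¹' {t}ᶜ).indicator (fun _ => δ) ω) ∂P :=
        integral_mono (hcost.add hgZ) (hLZ.add ((integrable_const δ).indicator hmeas))
          fun ω => hstep (Z ω)
    _ = _ := by
        rw [integral_add hLZ ((integrable_const δ).indicator hmeas),
          integral_indicator_const δ hmeas, smul_eq_mul, mul_comm]

theorem totalCost_le_of_drift [IsProbabilityMeasure P]
    (hF : Measurable fun p : X × U × W => F p.1 p.2.1 p.2.2)
    (hπ : Measurable π) (ht : ∀ w, F t (π t) w = t) (hf : Measurable fun y => f y (π y))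
    (hfnn : ∀ y, 0 ≤ f y (π y)) (hL : Measurable L) (hC : ∀ y, |L y| ≤ C) (hLt : L t = 0)
    (hδ : 0 ≤ δ) (hdrift : ∀ y, y ≠ t → f y (π y) + ∫ w, L (F y (π y) w) ∂μ ≤ L y + δ)
    {ξ : ℕ → Ω → W} (hξ : ∀ k, Measurable (ξ k)) (hind : iIndepFun ξ P)
    (hlaw : ∀ k, P.map (ξ k) = μ) (x : X) (hτ : ∀ᵐ ω ∂P, hitTime t (trajOn F π x ξ) ω < ⊤) :
    (totalCost P t f π (trajOn F π x ξ) : EReal)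
      ≤ L x + ((ENNReal.ofReal δ * expHit P t (trajOn F π x ξ) : ℝ≥0∞) : EReal) := by
  set Y := trajOn F π x ξ
  have hY : ∀ k, Measurable (Y k) := measurable_trajOn hF hπ hξ
  have habs : ∀ ω, Monotone fun k => Y k ω = t := fun ω => monotone_traj_eq ht _
  set ψ := ({t}ᶜ : Set X).indicator fun y => f y (π y)
  have hψY : ∀ k, Integrable (fun ω => ψ (Y k ω)) P := fun k =>
    Integrable.of_bound
      ((hf.indicator (measurableSet_singleton t).compl).comp (hY k)).aestronglyMeasurable
      _ (ae_of_all _ fun ω => abs_indicator_le_of_drift hδ hfnn hC hdrift (Y k ω))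
  have key := coe_tsum_ofReal_le_of_telescoping
    (c := fun k => ∫ ω, ψ (Y k ω) ∂P) (d := fun k => δ * P.real (Y k ⁻¹' {t}ᶜ))
    (fun k => integral_nonneg fun ω => Set.indicator_nonneg (fun y _ => hfnn y) _)
    (fun k => mul_nonneg hδ measureReal_nonneg)
    (tendsto_integral_comp_of_hitTime_lt_top habs hY hτ hL hC hLt)
    (fun k => integral_add_integral_le_of_drift hF hπ ht hL hC hLt hdrift (hY k) (hξ k)
      (indepFun_trajOn hF hπ hξ hind k) (hlaw k) (hψY k))
  rw [totalCost_eq_tsum_lintegral habs hY hf, expHit_eq_tsum_measure habs hY,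
    ← ENNReal.tsum_mul_left]
  convert key using 4
  · exact (ofReal_integral_eq_lintegral_ofReal (hψY _)
      (ae_of_all _ fun ω => Set.indicator_nonneg (fun y _ => hfnn y) _)).symm
  · simp [Y, trajOn, traj]
  · ext k
    rw [ENNReal.ofReal_mul hδ, ofReal_measureReal]

end Drift

theorem add_integral_le_of_rollout {X U W : Type*} [MeasurableSpace W] {μ : Measure W}
    [IsProbabilityMeasure μ] {t : X} {Ua : X → Set U} {F : X → U → W → X} {f : X → U → ℝ}
    {Vstar V : X → ℝ} {π : X → U} {ε : ℝ}
    (hVsint : ∀ y u, Integrable (fun w => Vstar (F y u w)) μ)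
    (hVint : ∀ y u, Integrable (fun w => V (F y u w)) μ)
    (hVsfix : ∀ y, Vstar y = bellman μ t Ua f F Vstar y) (happrox : ∀ y, |V y - Vstar y| ≤ ε)
    (hgreedy : ∀ y, y ≠ t → π y ∈ Ua y ∧ ∀ u ∈ Ua y,
      f y (π y) + ∫ w, V (F y (π y) w) ∂μ ≤ f y u + ∫ w, V (F y u w) ∂μ)
    {y : X} (hy : y ≠ t) :
    f y (π y) + ∫ w, Vstar (F y (π y) w) ∂μ ≤ Vstar y + 2 * ε := by
  have hclose : ∀ u, |∫ w, V (F y u w) ∂μ - ∫ w, Vstar (F y u w) ∂μ| ≤ ε := fun u => by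
    rw [← integral_sub (hVint y u) (hVsint y u)]
    exact abs_integral_comp_le (L := fun z => V z - Vstar z) happrox (F y u)
  obtain ⟨hmem, hmin⟩ := hgreedy y hy
  have : Nonempty (Ua y) := ⟨⟨π y, hmem⟩⟩
  have hinf : f y (π y) + ∫ w, Vstar (F y (π y) w) ∂μ - 2 * ε
      ≤ ⨅ u : Ua y, (f y u + ∫ w, Vstar (F y u w) ∂μ) :=
    le_ciInf fun u => by
      linarith [abs_le.1 (hclose (π y)), abs_le.1 (hclose u), hmin u u.2]
  rw [hVsfix y, bellman, if_neg hy]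
  linarith

theorem rollout_performance_bound_general
    {X U W Ω : Type*} [MeasurableSpace X] [MeasurableSingletonClass X]
    [MeasurableSpace U] [MeasurableSpace W] [MeasurableSpace Ω]
    (μ : Measure W) [IsProbabilityMeasure μ] (P : Measure Ω) [IsProbabilityMeasure P]
    (t : X) (u0 : U) (Ua : X → Set U) (F : X → U → W → X) (f : X → U → ℝ)
    -- SSP model: nonempty control sets, nonnegative measurable stage cost, measurable dynamics,
    -- absorbing cost-free terminal state
    (hfnn : ∀ y u, 0 ≤ f y u)
    (hFmeas : Measurable fun p : X × U × W => F p.1 p.2.1 p.2.2)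
    (hfmeas : Measurable fun p : X × U => f p.1 p.2)
    (hFt : ∀ w, F t u0 w = t)
    -- V* : bounded measurable, V*(t)=0, Bellman fixed point, well-defined one-step integrals
    (Vstar : X → ℝ) (hVsmeas : Measurable Vstar) (hVsbdd : ∃ C, ∀ y, |Vstar y| ≤ C)
    (hVst : Vstar t = 0) (hVsfix : ∀ y, Vstar y = bellman μ t Ua f F Vstar y)
    (hVsint : ∀ y u, Integrable (fun w => Vstar (F y u w)) μ)
    -- V : bounded measurable surrogate with V(t)=0 and ‖V - V*‖∞ ≤ ε
    (V : X → ℝ)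
    (hVint : ∀ y u, Integrable (fun w => V (F y u w)) μ)
    (ε : ℝ) (happrox : ∀ y, |V y - Vstar y| ≤ ε)
    (πR : X → U) (hπmeas : Measurable πR)
    -- rollout (one-step greedy) policy for V, with the minimum attained
    (hπt : πR t = u0)
    (hgreedy : ∀ y, y ≠ t → πR y ∈ Ua y ∧ ∀ u ∈ Ua y,
      f y (πR y) + ∫ w, V (F y (πR y) w) ∂μ ≤ f y u + ∫ w, V (F y u w) ∂μ)
    -- i.i.d. disturbance sequence with common law μ on an abstract probability space
    (ξ : ℕ → Ω → W) (hξmeas : ∀ k, Measurable (ξ k))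
    (hξindep : iIndepFun ξ P)
    (hξlaw : ∀ k, P.map (ξ k) = μ)
    -- properness of the closed loop from x: τ < ∞ a.s. and J(x) < ∞
    (x : X)
    (hproper_tau : ∀ᵐ ω ∂P, hitTime t (trajOn F πR x ξ) ω < ⊤) :
    (totalCost P t f πR (trajOn F πR x ξ) : EReal)
      ≤ (Vstar x : EReal) +
        ((ENNReal.ofReal (2 * ε) * expHit P t (trajOn F πR x ξ) : ℝ≥0∞) : EReal) := by
  have hε : 0 ≤ ε := (abs_nonneg _).trans (happrox t)
  have hπ_absorb : ∀ w, F t (πR t) w = t := by rw [hπt]; exact hFt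
  obtain ⟨C, hC⟩ := hVsbdd
  exact totalCost_le_of_drift hFmeas hπmeas hπ_absorb
    (hfmeas.comp (measurable_id.prodMk hπmeas)) (fun y => hfnn y _) hVsmeas hC hVst (by linarith)
    (fun y hy => add_integral_le_of_rollout hVsint hVint hVsfix happrox hgreedy hy)
    hξmeas hξindep hξlaw x hproper_tau

/-- Rollout performance bound: if `V* = T V*`, `‖V - V*‖∞ ≤ ε`, and the rollout policy `π_R`
for `V` is proper from `x`, then `J^{π_R}(x) - V*(x) ≤ 2ε · E[τ]`, stated in `EReal` as
`J^{π_R}(x) ≤ V*(x) + 2ε · E[τ]`. -/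
theorem rollout_performance_bound
    {X U W Ω : Type*} [MeasurableSpace X] [MeasurableSingletonClass X]
    [MeasurableSpace U] [MeasurableSpace W] [MeasurableSpace Ω]
    (μ : Measure W) [IsProbabilityMeasure μ] (P : Measure Ω) [IsProbabilityMeasure P]
    (t : X) (u0 : U) (Ua : X → Set U) (F : X → U → W → X) (f : X → U → ℝ)
    -- SSP model: nonempty control sets, nonnegative measurable stage cost, measurable dynamics,
    -- absorbing cost-free terminal state
    (hUne : ∀ y, (Ua y).Nonempty) (hfnn : ∀ y u, 0 ≤ f y u)
    (hFmeas : Measurable fun p : X × U × W => F p.1 p.2.1 p.2.2)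
    (hfmeas : Measurable fun p : X × U => f p.1 p.2)
    (hUt : Ua t = {u0}) (hft : f t u0 = 0) (hFt : ∀ w, F t u0 w = t)
    -- V* : bounded measurable, V*(t)=0, Bellman fixed point, well-defined one-step integrals
    (Vstar : X → ℝ) (hVsmeas : Measurable Vstar) (hVsbdd : ∃ C, ∀ y, |Vstar y| ≤ C)
    (hVst : Vstar t = 0) (hVsfix : ∀ y, Vstar y = bellman μ t Ua f F Vstar y)
    (hVsint : ∀ y u, Integrable (fun w => Vstar (F y u w)) μ)
    -- V : bounded measurable surrogate with V(t)=0 and ‖V - V*‖∞ ≤ ε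
    (V : X → ℝ) (hVmeas : Measurable V) (hVbdd : ∃ C, ∀ y, |V y| ≤ C) (hVt : V t = 0)
    (hVint : ∀ y u, Integrable (fun w => V (F y u w)) μ)
    (ε : ℝ) (hε : 0 ≤ ε) (happrox : ∀ y, |V y - Vstar y| ≤ ε)
    (πR : X → U) (hπmeas : Measurable πR)
    -- rollout (one-step greedy) policy for V, with the minimum attained
    (hπt : πR t = u0)
    (hgreedy : ∀ y, y ≠ t → πR y ∈ Ua y ∧ ∀ u ∈ Ua y,
      f y (πR y) + ∫ w, V (F y (πR y) w) ∂μ ≤ f y u + ∫ w, V (F y u w) ∂μ)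
    -- i.i.d. disturbance sequence with common law μ on an abstract probability space
    (ξ : ℕ → Ω → W) (hξmeas : ∀ k, Measurable (ξ k))
    (hξindep : iIndepFun ξ P)
    (hξlaw : ∀ k, P.map (ξ k) = μ)
    -- properness of the closed loop from x: τ < ∞ a.s. and J(x) < ∞
    (x : X)
    (hproper_tau : ∀ᵐ ω ∂P, hitTime t (trajOn F πR x ξ) ω < ⊤)
    (hproper_J : totalCost P t f πR (trajOn F πR x ξ) < ⊤) :
    (totalCost P t f πR (trajOn F πR x ξ) : EReal)
      ≤ (Vstar x : EReal) +
        ((ENNReal.ofReal (2 * ε) * expHit P t (trajOn F πR x ξ) : ℝ≥0∞) : EReal) :=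
  rollout_performance_bound_general μ P t u0 Ua F f hfnn hFmeas hfmeas hFt Vstar hVsmeas hVsbdd hVst
    hVsfix hVsint V hVint ε happrox πR hπmeas hπt hgreedy ξ hξmeas hξindep hξlaw x hproper_tau
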